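/- Let $m\ge 2$, let $\widetilde{Y}$ be an abstract van Kampen 2-complex with $k$ abstract relators whose $i$-th relator has $\eta_i$ free-to-fill abstract letters. Then the number of fillings of $\widetilde{Y}$ by van Kampen 2-complexes over the alphabet $X_m^{\pm}$ (i.e., compatible edge-labelings together with the induced relator words) is at most $\prod_{i=1}^{k} 2m\,(2m-1)^{\eta_i - 1}$. -/

import Mathlib

open Finset

noncomputable section

/-- Lexicographic order on abstract letters `(i, j)`. -/
def lexLe (x y : ℕ × ℕ) : Prop := x.1 < y.1 ∨ (x.1 = y.1 ∧ x.2 ≤ y.2)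

variable {k : ℕ} {E F : Type}

/-- The abstract letter `(i, j)` decorates the geometric edge `e` if some face labeled
`i` has `e` as its `j`-th boundary edge. -/
def Decorates (L : Fin k → ℕ) (lab : F → Fin k) (bd : F → ℕ → E)
    (e : E) (i : Fin k) (j : ℕ) : Prop :=
  j < L i ∧ ∃ f : F, lab f = i ∧ bd f j = e

/-- The abstract letter `(i, j)` is *free-to-fill* if on every geometric edge that it
decorates it is the (lexicographically) minimal decoration. -/
def FreeToFill (L : Fin k → ℕ) (lab : F → Fin k) (bd : F → ℕ → E)
    (i : Fin k) (j : ℕ) : Prop :=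
  j < L i ∧ ∀ e : E, Decorates L lab bd e i j →
    ∀ (i' : Fin k) (j' : ℕ), Decorates L lab bd e i' j' → lexLe (i.1, j) (i'.1, j')

/-!
Read the relator words position by position in the lexicographic order of the abstract letters
`(i, j)`. A letter that is not free-to-fill shares a geometric edge with a smaller one, so edge
compatibility determines it from an earlier letter. In each relator the first free-to-fill letter
is one of `2m` letters, and a later free-to-fill letter at position `j` is one of the `2m - 1`
letters other than the inverse of the (already determined) letter at position `j - 1`, because
the word is reduced.
-/

open Function

theorem WellFounded.injective_of_forall_rel_eq {γ ι α β : Type*} {r : ι → ι → Prop}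
    (hr : WellFounded r) {ev : γ → ι → α} (hev : Injective ev) {Φ : γ → β}
    (hΦ : ∀ a b, Φ a = Φ b → ∀ x, (∀ y, r y x → ev a y = ev b y) → ev a x = ev b x) :
    Injective Φ :=
  fun a b hab => hev <| funext fun x => hr.induction x fun x ih => hΦ a b hab x ih

section FreePositions

variable (L : Fin k → ℕ) (lab : F → Fin k) (bd : F → ℕ → E) (i : Fin k)

open Classical in
def freePositions : Finset ℕ := {j ∈ range (L i) | FreeToFill L lab bd i j}

/-- Since `sInf ∅ = 0` in `ℕ`, this is `0` when relator `i` has no free-to-fill letter. -/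
def firstFree : ℕ := sInf {j | FreeToFill L lab bd i j}

def laterFreePositions : Finset ℕ := (freePositions L lab bd i).erase (firstFree L lab bd i)

variable {L lab bd i}

theorem mem_freePositions {j : ℕ} :
    j ∈ freePositions L lab bd i ↔ FreeToFill L lab bd i j := by
  simp only [freePositions, mem_filter, mem_range, and_iff_right_iff_imp]
  exact fun h => h.1

theorem card_freeToFill :
    Nat.card {j // FreeToFill L lab bd i j} = #(freePositions L lab bd i) := by
  rw [← Nat.card_eq_finsetCard]
  exact Nat.card_congr (Equiv.subtypeEquivRight fun _ => mem_freePositions.symm)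

theorem firstFree_le {j : ℕ} (h : FreeToFill L lab bd i j) : firstFree L lab bd i ≤ j :=
  Nat.sInf_le h

theorem firstFree_lt (hL : 0 < L i) : firstFree L lab bd i < L i := by
  by_cases h : ∃ j, FreeToFill L lab bd i j
  · exact (Nat.sInf_mem h).1
  · simpa [firstFree, not_exists.mp h] using hL

theorem card_laterFreePositions :
    #(laterFreePositions L lab bd i) = #(freePositions L lab bd i) - 1 := by
  by_cases h : ∃ j, FreeToFill L lab bd i j
  · exact card_erase_of_mem (mem_freePositions.2 (Nat.sInf_mem h))
  · have : freePositions L lab bd i = ∅ :=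
      eq_empty_of_forall_notMem fun j hj => h ⟨j, mem_freePositions.1 hj⟩
    simp [laterFreePositions, this]

theorem lt_of_mem_laterFreePositions {p : ℕ} (hp : p ∈ laterFreePositions L lab bd i) :
    p < L i :=
  (mem_freePositions.1 (mem_of_mem_erase hp)).1

theorem pos_of_mem_laterFreePositions {p : ℕ} (hp : p ∈ laterFreePositions L lab bd i) :
    0 < p := by
  have := firstFree_le (mem_freePositions.1 (mem_of_mem_erase hp))
  have := ne_of_mem_erase hp
  omega

theorem exists_lex_lt_of_not_freeToFill {j : ℕ} (hj : j < L i)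
    (h : ¬FreeToFill L lab bd i j) :
    ∃ (f f' : F) (j' : ℕ) (_ : j' < L (lab f')), lab f = i ∧ bd f j = bd f' j' ∧
      toLex ((lab f').1, j') < toLex (i.1, j) := by
  simp only [FreeToFill, hj, true_and, not_forall] at h
  obtain ⟨_, ⟨-, f, rfl, rfl⟩, i', j', ⟨hj', f', rfl, he⟩, hlex⟩ := h
  refine ⟨f, f', j', hj', rfl, he.symm, ?_⟩
  simp only [lexLe, not_or, not_and, not_le] at hlex
  rw [Prod.Lex.toLex_lt_toLex]
  omega

end FreePositions

section Filling

def IsFilling (m : ℕ) (L : Fin k → ℕ) (hL : ∀ i, 0 < L i) (lab : F → Fin k)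
    (bd : F → ℕ → E) (dir : F → ℕ → Bool) (w : (i : Fin k) → Fin (L i) → Fin m × Bool) :
    Prop :=
  (∀ (i : Fin k) (j : Fin (L i)),
      w i ⟨(j.1 + 1) % L i, Nat.mod_lt _ (hL i)⟩ ≠ ((w i j).1, !(w i j).2)) ∧
  (∀ (f f' : F) (j j' : ℕ) (hj : j < L (lab f)) (hj' : j' < L (lab f')),
      bd f j = bd f' j' →
        w (lab f) ⟨j, hj⟩ =
          (if dir f j = dir f' j' then w (lab f') ⟨j', hj'⟩
           else ((w (lab f') ⟨j', hj'⟩).1, !(w (lab f') ⟨j', hj'⟩).2)))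

variable {m : ℕ} {L : Fin k → ℕ} {hL : ∀ i, 0 < L i} {lab : F → Fin k} {bd : F → ℕ → E}
  {dir : F → ℕ → Bool} {w w' : (i : Fin k) → Fin (L i) → Fin m × Bool}

theorem IsFilling.ne_inv_prev (hw : IsFilling m L hL lab bd dir w) {i : Fin k} {p : ℕ}
    (hp0 : 0 < p) (hp : p < L i) :
    w i ⟨p, hp⟩ ≠ ((w i ⟨p - 1, by omega⟩).1, !(w i ⟨p - 1, by omega⟩).2) := by
  have hsucc : (p - 1 + 1) % L i = p := by rw [Nat.sub_add_cancel hp0, Nat.mod_eq_of_lt hp]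
  simpa only [hsucc] using hw.1 i ⟨p - 1, by omega⟩

theorem IsFilling.eq_of_not_freeToFill (hw : IsFilling m L hL lab bd dir w)
    (hw' : IsFilling m L hL lab bd dir w') {i : Fin k} {j : ℕ} (hj : j < L i)
    (hfree : ¬FreeToFill L lab bd i j)
    (hlt : ∀ (i' : Fin k) (j' : ℕ) (hj' : j' < L i'), toLex (i'.1, j') < toLex (i.1, j) →
      w i' ⟨j', hj'⟩ = w' i' ⟨j', hj'⟩) :
    w i ⟨j, hj⟩ = w' i ⟨j, hj⟩ := by
  obtain ⟨f, f', j', hj', rfl, he, hlex⟩ := exists_lex_lt_of_not_freeToFill hj hfree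
  rw [hw.2 f f' j j' hj hj' he, hw'.2 f f' j j' hj hj' he, hlt _ _ hj' hlex]

variable (hm : 0 < m)

/-- Swapping the forbidden letter, the inverse of the preceding one, with the base letter
`(0, false)` codes the remaining `2m - 1` letters injectively by letters other than the base. -/
def fillingCode (w : {w // IsFilling m L hL lab bd dir w}) (i : Fin k) :
    (Fin m × Bool) ×
      (laterFreePositions L lab bd i → {v : Fin m × Bool // v ≠ (⟨0, hm⟩, false)}) :=
  (w.1 i ⟨firstFree L lab bd i, firstFree_lt (hL i)⟩, fun p =>
    have hp := lt_of_mem_laterFreePositions p.2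
    have hp0 := pos_of_mem_laterFreePositions p.2
    let prev := w.1 i ⟨p - 1, by omega⟩
    ⟨Equiv.swap (prev.1, !prev.2) (⟨0, hm⟩, false) (w.1 i ⟨p, hp⟩), fun h =>
      w.2.ne_inv_prev hp0 hp <| (Equiv.swap_apply_eq_iff.1 h).trans (Equiv.swap_apply_right _ _)⟩)

theorem fillingCode_injective :
    Injective (fillingCode (hL := hL) (lab := lab) (bd := bd) (dir := dir) hm) := by
  refine WellFounded.injective_of_forall_rel_eq (ι := Σ i, Fin (L i))
    (r := fun y x => toLex (y.1.1, y.2.1) < toLex (x.1.1, x.2.1)) wellFounded_lt.onFun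
    (ev := fun w x => w.1 x.1 x.2) ?_ ?_
  · exact fun w w' h => Subtype.ext (funext fun i => funext fun j => congrFun h ⟨i, j⟩)
  rintro w w' hc ⟨i, j, hj⟩ hlt
  by_cases hfree : FreeToFill L lab bd i j
  · by_cases hfirst : j = firstFree L lab bd i
    · subst hfirst
      exact congrArg (fun c => (c i).1) hc
    have hp : j ∈ laterFreePositions L lab bd i :=
      mem_erase.2 ⟨hfirst, mem_freePositions.2 hfree⟩
    have hp0 := pos_of_mem_laterFreePositions hp
    have hprev : w.1 i ⟨j - 1, by omega⟩ = w'.1 i ⟨j - 1, by omega⟩ :=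
      hlt ⟨i, j - 1, by omega⟩ (Prod.Lex.toLex_lt_toLex.2 (.inr ⟨rfl, by dsimp only; omega⟩))
    have hcode := congrArg (fun c => ((c i).2 ⟨j, hp⟩).1) hc
    simp only [fillingCode, hprev] at hcode
    exact (Equiv.swap _ _).injective hcode
  · exact w.2.eq_of_not_freeToFill w'.2 hj hfree fun i' j' hj' h => hlt ⟨i', j', hj'⟩ h

end Filling

theorem number_of_fillings_le_general
    (m : ℕ) (hm : 2 ≤ m)
    (L : Fin k → ℕ) (hL : ∀ i, 0 < L i)
    (lab : F → Fin k) (bd : F → ℕ → E) (dir : F → ℕ → Bool) :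
    Nat.card {w : (i : Fin k) → Fin (L i) → Fin m × Bool //
        (∀ (i : Fin k) (j : Fin (L i)),
          w i ⟨(j.1 + 1) % L i, Nat.mod_lt _ (hL i)⟩ ≠ ((w i j).1, !(w i j).2)) ∧
        (∀ (f f' : F) (j j' : ℕ) (hj : j < L (lab f)) (hj' : j' < L (lab f')),
          bd f j = bd f' j' →
            w (lab f) ⟨j, hj⟩ =
              (if dir f j = dir f' j' then w (lab f') ⟨j', hj'⟩
               else ((w (lab f') ⟨j', hj'⟩).1, !(w (lab f') ⟨j', hj'⟩).2)))}
      ≤ ∏ i : Fin k,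
          2 * m * (2 * m - 1) ^ (Nat.card {j : ℕ // FreeToFill L lab bd i j} - 1) := by
  have hm0 : 0 < m := by omega
  have hletters : Nat.card (Fin m × Bool) = 2 * m := by simp [mul_comm]
  have havoid : Nat.card {v : Fin m × Bool // v ≠ (⟨0, hm0⟩, false)} = 2 * m - 1 := by
    simp [mul_comm]
  calc _ ≤ Nat.card ((i : Fin k) → (Fin m × Bool) ×
          (laterFreePositions L lab bd i → {v : Fin m × Bool // v ≠ (⟨0, hm0⟩, false)})) :=
        Nat.card_le_card_of_injective _ (fillingCode_injective (hL := hL) (dir := dir) hm0)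
    _ = _ := by
      rw [Nat.card_pi]
      refine prod_congr rfl fun i _ => ?_
      rw [Nat.card_prod, Nat.card_fun, hletters, havoid, Nat.card_eq_finsetCard,
        card_laterFreePositions, card_freeToFill]

/-- let `m ≥ 2` and let `Ỹ` be an abstract van Kampen 2-complex with `k`
abstract relators whose `i`-th relator has `ηᵢ` free-to-fill abstract letters.  Then the
number of fillings of `Ỹ` over the alphabet `Xₘ± = {x₁±, …, xₘ±}` is at most
`∏ᵢ 2m (2m-1)^(ηᵢ - 1)`.

The complex is recorded by geometric edges `E`, faces `F`, relator lengths `L`, face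
labels `lab`, boundary maps `bd` (the `j`-th geometric edge of `∂f`) and traversal
directions `dir` (the orientation with which `∂f` traverses its `j`-th edge).  A letter
of `Xₘ±` is a pair in `Fin m × Bool`, whose inverse flips the `Bool`.  A filling is a
choice of words `w i : Fin (L i) → Fin m × Bool` (so that relator `i` is the word
`w i 0 ⋯ w i (L i - 1)`) such that each word is cyclically reduced and the induced edge
labels are consistent: two boundary positions traversing the same geometric edge carry
the same letter (up to inversion according to the directions). -/
theorem number_of_fillings_le
    (m : ℕ) (hm : 2 ≤ m) [Fintype E] [Fintype F]
    (L : Fin k → ℕ) (hL : ∀ i, 0 < L i)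
    (lab : F → Fin k) (bd : F → ℕ → E) (dir : F → ℕ → Bool)
    (hni : ∀ e : E, ∃ f : F, ∃ j < L (lab f), bd f j = e) :
    Nat.card {w : (i : Fin k) → Fin (L i) → Fin m × Bool //
        (∀ (i : Fin k) (j : Fin (L i)),
          w i ⟨(j.1 + 1) % L i, Nat.mod_lt _ (hL i)⟩ ≠ ((w i j).1, !(w i j).2)) ∧
        (∀ (f f' : F) (j j' : ℕ) (hj : j < L (lab f)) (hj' : j' < L (lab f')),
          bd f j = bd f' j' →
            w (lab f) ⟨j, hj⟩ =
              (if dir f j = dir f' j' then w (lab f') ⟨j', hj'⟩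
               else ((w (lab f') ⟨j', hj'⟩).1, !(w (lab f') ⟨j', hj'⟩).2)))}
      ≤ ∏ i : Fin k,
          2 * m * (2 * m - 1) ^ (Nat.card {j : ℕ // FreeToFill L lab bd i j} - 1) :=
  number_of_fillings_le_general m hm L hL lab bd dir
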